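/- Let G=(V,E) be a mixed graph and A, B, C disjoint subsets of V. Then A and B are m-separated given C in G if and only if A and B are m-separated given C in the induced subgraph G_{an(A∪B∪C)}, where an(S) denotes the set of ancestors of S (including S itself). -/

import Mathlib

structure MixedGraph (V : Type*) where
  dir : V → V → Prop
  bi : V → V → Prop
  bi_symm : ∀ {a b : V}, bi a b → bi b a

namespace MixedGraph

variable {V : Type*}

/-- A single edge traversal: a directed edge traversed forwards (`a → b`),
a directed edge traversed backwards (`a ← b`), or a bi-directed edge (`a ↔ b`). -/
inductive Step (G : MixedGraph V) : V → V → Type _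
  | fwd {a b : V} : G.dir a b → G.Step a b
  | bwd {a b : V} : G.dir b a → G.Step a b
  | bi  {a b : V} : G.bi a b → G.Step a b

/-- The edge has an arrowhead at its second endpoint. -/
def Step.arrowAtEnd {G : MixedGraph V} : {a b : V} → G.Step a b → Prop
  | _, _, .fwd _ => True
  | _, _, .bwd _ => False
  | _, _, .bi _ => True

/-- The edge has an arrowhead at its first endpoint. -/
def Step.arrowAtStart {G : MixedGraph V} : {a b : V} → G.Step a b → Prop
  | _, _, .fwd _ => False
  | _, _, .bwd _ => True
  | _, _, .bi _ => True

/-- Paths (possibly self-intersecting) in a mixed graph. -/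
inductive Walk (G : MixedGraph V) : V → V → Type _
  | nil {a : V} : G.Walk a a
  | cons {a b c : V} : G.Step a b → G.Walk b c → G.Walk a c

namespace Walk

variable {G : MixedGraph V}

def length : {a b : V} → G.Walk a b → ℕ
  | _, _, .nil => 0
  | _, _, .cons _ w => w.length + 1

def verts : {a b : V} → G.Walk a b → List V
  | a, _, .nil => [a]
  | a, _, .cons _ w => a :: w.verts

/-- The intermediate vertices of a walk. -/
def interm {a b : V} (w : G.Walk a b) : List V := w.verts.tail.dropLast

def append : {a b c : V} → G.Walk a b → G.Walk b c → G.Walk a c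
  | _, _, _, .nil, w' => w'
  | _, _, _, .cons s w, w' => .cons s (w.append w')

/-- Every intermediate vertex of the walk is a collider. -/
def IsPureCollider : {a b : V} → G.Walk a b → Prop
  | _, _, .nil => True
  | _, _, .cons _ .nil => True
  | _, _, .cons s (.cons t w) =>
      s.arrowAtEnd ∧ t.arrowAtStart ∧ (Walk.cons t w).IsPureCollider

/-- The walk is m-connecting given `C`: every non-collider on it is outside `C`
and every collider on it is in `C`. -/
def IsMConnecting (C : Set V) : {a b : V} → G.Walk a b → Prop
  | _, _, .nil => True
  | _, _, .cons _ .nil => True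
  | _, _, .cons (b := m) s (.cons t w) =>
      ((s.arrowAtEnd ∧ t.arrowAtStart) ↔ m ∈ C) ∧ (Walk.cons t w).IsMConnecting C

end Walk

variable (G : MixedGraph V)

/-- `A` and `B` are m-separated given `C`: no m-connecting walk given `C`
between a vertex of `A` and a vertex of `B`. -/
def MSep (A B C : Set V) : Prop :=
  ∀ a ∈ A, ∀ b ∈ B, ∀ w : G.Walk a b, ¬ w.IsMConnecting C

/-- `u` and `v` are joined by a pure-collider path (with at least one edge). -/
def ColliderConn (u v : V) : Prop :=
  ∃ w : G.Walk u v, 0 < w.length ∧ w.IsPureCollider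

/-- Vertices connected to `S` by a (possibly empty) path of bi-directed edges. -/
def district (S : Set V) : Set V :=
  {v | ∃ s ∈ S, Relation.ReflTransGen G.bi s v}

/-- Children of vertices in `S`. -/
def ch (S : Set V) : Set V := {v | ∃ a ∈ S, G.dir a v}

/-- Ancestors of `S` (including `S` itself). -/
def an (S : Set V) : Set V :=
  {v | ∃ s ∈ S, Relation.ReflTransGen G.dir v s}

/-- The subgraph induced by `W`: edges with both endpoints in `W`. -/
def induce (W : Set V) : MixedGraph V where
  dir a b := G.dir a b ∧ a ∈ W ∧ b ∈ W
  bi a b := G.bi a b ∧ a ∈ W ∧ b ∈ W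
  bi_symm h := ⟨G.bi_symm h.1, h.2.2, h.2.1⟩

/-- Separation in an undirected graph with adjacency `adj`: every path between
`A` and `B` intersects `C`, i.e. `B` is not reachable from `A` avoiding `C`. -/
def UndirSep (adj : V → V → Prop) (A B C : Set V) : Prop :=
  ∀ a ∈ A, ∀ b ∈ B, ¬ Relation.ReflTransGen (fun x y => adj x y ∧ y ∉ C) a b

inductive EdgeKind | fwd | bwd | bi
deriving DecidableEq

def Step.kind {G : MixedGraph V} : {a b : V} → G.Step a b → EdgeKind
  | _, _, .fwd _ => .fwd
  | _, _, .bwd _ => .bwd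
  | _, _, .bi _ => .bi

def Walk.kinds {G : MixedGraph V} : {a b : V} → G.Walk a b → List EdgeKind
  | _, _, .nil => []
  | _, _, .cons s w => s.kind :: w.kinds

end MixedGraph

/-! Every vertex of an m-connecting walk from `a` to `b` given `C` is an ancestor of
`{a, b} ∪ C`: a non-collider has an outgoing directed edge along the walk, and following
directed edges forwards along the walk one reaches either a collider (which is in `C`) or the
endpoint. Hence such a walk lies in `G_{an(A ∪ B ∪ C)}`, where it is still m-connecting, while
conversely any walk in an induced subgraph is a walk in `G`. -/

namespace MixedGraph

variable {V : Type*} {G : MixedGraph V}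

lemma subset_an (S : Set V) : S ⊆ G.an S :=
  fun s hs => ⟨s, hs, .refl⟩

lemma an_subset_an {S T : Set V} (h : S ⊆ G.an T) : G.an S ⊆ G.an T := by
  rintro v ⟨s, hs, hvs⟩
  obtain ⟨t, ht, hst⟩ := h hs
  exact ⟨t, ht, hvs.trans hst⟩

lemma an_mono {S T : Set V} (h : S ⊆ T) : G.an S ⊆ G.an T :=
  an_subset_an (h.trans (subset_an T))

lemma mem_an_of_dir {S : Set V} {a b : V} (hab : G.dir a b) (hb : b ∈ G.an S) : a ∈ G.an S :=
  let ⟨s, hs, hbs⟩ := hb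
  ⟨s, hs, .head hab hbs⟩

namespace Step

lemma arrowAtStart_or_arrowAtEnd {a b : V} (s : G.Step a b) : s.arrowAtStart ∨ s.arrowAtEnd := by
  cases s <;> simp [arrowAtStart, arrowAtEnd]

lemma dir_of_not_arrowAtStart {a b : V} {s : G.Step a b} (h : ¬ s.arrowAtStart) : G.dir a b := by
  cases s <;> simp_all [arrowAtStart]

lemma dir_of_not_arrowAtEnd {a b : V} {s : G.Step a b} (h : ¬ s.arrowAtEnd) : G.dir b a := by
  cases s <;> simp_all [arrowAtEnd]

end Step

namespace Walk

lemma start_mem_verts {a b : V} (w : G.Walk a b) : a ∈ w.verts := by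
  cases w <;> simp [verts]

variable {C : Set V}

lemma IsMConnecting.tail {a m b : V} {s : G.Step a m} {w : G.Walk m b}
    (h : (cons s w).IsMConnecting C) : w.IsMConnecting C := by
  cases w
  · trivial
  · exact h.2

lemma IsMConnecting.not_arrowAtStart {a m c b : V} {s : G.Step a m} {t : G.Step m c}
    {w : G.Walk c b} (h : (cons s (cons t w)).IsMConnecting C) (hm : m ∉ C)
    (hs : s.arrowAtEnd) : ¬ t.arrowAtStart :=
  fun ht => hm (h.1.mp ⟨hs, ht⟩)

lemma IsMConnecting.mem_an_of_not_arrowAtStart {a m b : V} {s : G.Step a m} {w : G.Walk m b}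
    (h : (cons s w).IsMConnecting C) (hs : ¬ s.arrowAtStart) : a ∈ G.an ({b} ∪ C) := by
  have ham := Step.dir_of_not_arrowAtStart hs
  induction w generalizing a with
  | nil => exact ⟨_, .inl rfl, .single ham⟩
  | @cons m c b t w ih =>
    by_cases hm : m ∈ C
    · exact ⟨m, .inr hm, .single ham⟩
    · have ht := h.not_arrowAtStart hm (s.arrowAtStart_or_arrowAtEnd.resolve_left hs)
      exact mem_an_of_dir ham (ih h.2 ht (Step.dir_of_not_arrowAtStart ht))

lemma IsMConnecting.mem_an_of_interm {a m c b : V} {s : G.Step a m} {t : G.Step m c}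
    {w : G.Walk c b} (h : (cons s (cons t w)).IsMConnecting C) : m ∈ G.an ({a, b} ∪ C) := by
  by_cases hm : m ∈ C
  · exact subset_an _ (.inr hm)
  by_cases hs : s.arrowAtEnd
  · have hmb := h.tail.mem_an_of_not_arrowAtStart (h.not_arrowAtStart hm hs)
    exact an_mono (Set.union_subset_union_left C (Set.subset_insert a {b})) hmb
  · exact ⟨a, .inl (.inl rfl), .single (Step.dir_of_not_arrowAtEnd hs)⟩

lemma IsMConnecting.verts_subset_an {a b : V} {w : G.Walk a b} (h : w.IsMConnecting C) :
    ∀ v ∈ w.verts, v ∈ G.an ({a, b} ∪ C) := by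
  induction w with
  | nil =>
    simp only [verts, List.mem_singleton, forall_eq]
    exact subset_an _ (.inl (.inl rfl))
  | @cons a m b s w ih =>
    have hm : m ∈ G.an ({a, b} ∪ C) := by
      cases w with
      | nil => exact subset_an _ (.inl (.inr rfl))
      | cons t w => exact h.mem_an_of_interm
    have hsub : ({m, b} ∪ C : Set V) ⊆ G.an ({a, b} ∪ C) := by
      rintro x ((rfl | rfl) | hx)
      · exact hm
      · exact subset_an _ (.inl (.inr rfl))
      · exact subset_an _ (.inr hx)
    simp only [verts, List.forall_mem_cons]
    exact ⟨subset_an _ (.inl (.inl rfl)), fun v hv => an_subset_an hsub (ih h.tail v hv)⟩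

end Walk

section Induce

variable {W : Set V}

def Step.ofInduce {a b : V} : (G.induce W).Step a b → G.Step a b
  | .fwd h => .fwd h.1
  | .bwd h => .bwd h.1
  | .bi h => .bi h.1

def Step.toInduce {a b : V} (ha : a ∈ W) (hb : b ∈ W) : G.Step a b → (G.induce W).Step a b
  | .fwd h => .fwd ⟨h, ha, hb⟩
  | .bwd h => .bwd ⟨h, hb, ha⟩
  | .bi h => .bi ⟨h, ha, hb⟩

@[simp] lemma Step.arrowAtEnd_ofInduce {a b : V} (s : (G.induce W).Step a b) :
    s.ofInduce.arrowAtEnd = s.arrowAtEnd := by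
  cases s <;> rfl

@[simp] lemma Step.arrowAtStart_ofInduce {a b : V} (s : (G.induce W).Step a b) :
    s.ofInduce.arrowAtStart = s.arrowAtStart := by
  cases s <;> rfl

@[simp] lemma Step.arrowAtEnd_toInduce {a b : V} (ha : a ∈ W) (hb : b ∈ W) (s : G.Step a b) :
    (s.toInduce ha hb).arrowAtEnd = s.arrowAtEnd := by
  cases s <;> rfl

@[simp] lemma Step.arrowAtStart_toInduce {a b : V} (ha : a ∈ W) (hb : b ∈ W) (s : G.Step a b) :
    (s.toInduce ha hb).arrowAtStart = s.arrowAtStart := by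
  cases s <;> rfl

def Walk.ofInduce : {a b : V} → (G.induce W).Walk a b → G.Walk a b
  | _, _, .nil => .nil
  | _, _, .cons s w => .cons s.ofInduce w.ofInduce

def Walk.toInduce : {a b : V} → (w : G.Walk a b) → (∀ v ∈ w.verts, v ∈ W) →
    (G.induce W).Walk a b
  | _, _, .nil, _ => .nil
  | _, _, .cons s w, hw =>
    have hw' := List.forall_mem_cons.mp hw
    .cons (s.toInduce hw'.1 (hw'.2 _ w.start_mem_verts)) (w.toInduce hw'.2)

variable {C : Set V}

lemma Walk.IsMConnecting.ofInduce : {a b : V} → {w : (G.induce W).Walk a b} →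
    w.IsMConnecting C → w.ofInduce.IsMConnecting C
  | _, _, .nil, _ => trivial
  | _, _, .cons _ .nil, _ => trivial
  | _, _, .cons _ (.cons _ _), h => ⟨by simpa using h.1, IsMConnecting.ofInduce h.2⟩

lemma Walk.IsMConnecting.toInduce : {a b : V} → {w : G.Walk a b} →
    (hw : ∀ v ∈ w.verts, v ∈ W) → w.IsMConnecting C → (w.toInduce hw).IsMConnecting C
  | _, _, .nil, _, _ => trivial
  | _, _, .cons _ .nil, _, _ => trivial
  | _, _, .cons _ (.cons _ _), hw, h =>
    ⟨by simpa using h.1, IsMConnecting.toInduce (List.forall_mem_cons.mp hw).2 h.2⟩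

lemma MSep.induce {A B : Set V} (h : G.MSep A B C) : (G.induce W).MSep A B C :=
  fun a ha b hb w hw => h a ha b hb w.ofInduce hw.ofInduce

lemma MSep.of_induce {A B : Set V} (hW : G.an (A ∪ B ∪ C) ⊆ W)
    (h : (G.induce W).MSep A B C) : G.MSep A B C := by
  intro a ha b hb w hw
  have hab : ({a, b} ∪ C : Set V) ⊆ G.an (A ∪ B ∪ C) := by
    rintro x ((rfl | rfl) | hx)
    · exact subset_an _ (.inl (.inl ha))
    · exact subset_an _ (.inl (.inr hb))
    · exact subset_an _ (.inr hx)
  have hwW : ∀ v ∈ w.verts, v ∈ W := fun v hv => hW (an_subset_an hab (hw.verts_subset_an v hv))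
  exact h a ha b hb (w.toInduce hwW) (hw.toInduce hwW)

end Induce

end MixedGraph

theorem stmt_5_general {V : Type*} (G : MixedGraph V) (A B C : Set V) :
    G.MSep A B C ↔ (G.induce (G.an (A ∪ B ∪ C))).MSep A B C :=
  ⟨MixedGraph.MSep.induce, MixedGraph.MSep.of_induce subset_rfl⟩

/-- `A ⊥_m B | C` in `G` iff `A ⊥_m B | C` in the subgraph induced by `an(A ∪ B ∪ C)`. -/
theorem stmt_5 {V : Type*} (G : MixedGraph V) (A B C : Set V)
    (hAB : Disjoint A B) (hAC : Disjoint A C) (hBC : Disjoint B C) :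
    G.MSep A B C ↔ (G.induce (G.an (A ∪ B ∪ C))).MSep A B C :=
  stmt_5_general G A B C
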